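/- arXiv:1904.08819 — 2 statements merged into one kernel-verified Lean document; each statement's English description precedes it below -/
import Mathlib

section
/- Let q be a connected finite simple graph with at least one edge, and let D be a partition of the edge set E_q into edge-disjoint paths each consisting of at most 2 edges, such that the number of 1-edge paths in D is minimized subject to also being achievable greedily (i.e., D is compact: no two 1-edge paths in D could be merged into a single 2-edge path removal sequence preserving connectivity at each step). Then: if |E_q| is even, D contains exactly ⌊|E_q|/2⌋ paths, all of size 2; if |E_q| is odd, D contains exactly ⌊|E_q|/2⌋ paths of size 2 and one path of size 1, so |D| = ⌊|E_q|/2⌋ + 1. Equivalently, |D| = ⌈|E_q|/2⌉. -/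
/-- `s` is the edge set of a path with at most 2 edges: either a single edge,
or two edges sharing exactly one endpoint. -/
def IsPathEdgesLE2 {V : Type*} [DecidableEq V] (s : Finset (Sym2 V)) : Prop :=
  (∃ a b : V, a ≠ b ∧ s = {s(a, b)}) ∨
    (∃ a b c : V, a ≠ b ∧ b ≠ c ∧ a ≠ c ∧ s = {s(a, b), s(b, c)})

/-- `D` decomposes the edges of `q` into edge-disjoint paths of at most 2 edges. -/
def IsDecompLE2 {V : Type*} [Fintype V] [DecidableEq V]
    (q : SimpleGraph V) [DecidableRel q.Adj] (D : Finset (Finset (Sym2 V))) : Prop :=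
  (∀ s ∈ D, IsPathEdgesLE2 s) ∧
    (D : Set (Finset (Sym2 V))).Pairwise Disjoint ∧
    D.sup id = q.edgeFinset

/-!
Counting edges, every decomposition into paths of at most two edges has at least `⌈m/2⌉` paths,
so it suffices to build one with `⌈m/2⌉` paths. This is done by induction on `m`, keeping all
non-isolated vertices mutually reachable: such a graph with at least two edges contains a path
`a - b - c` whose removal preserves this. To find it, fix a root `r` and take a non-isolated
vertex `v` farthest from `r`. If `v` has two neighbours, remove two edges at `v`: every other
vertex still reaches `r` along a shortest path, and these avoid `v`. If `v` is a leaf hanging at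
`u`, remove `vu` together with an edge `uw`, where `w` is not the next vertex on a fixed
shortest path from `u` to `r`, unless `u` has no other neighbour.
-/

open Finset

namespace SimpleGraph

variable {V : Type*} {G : SimpleGraph V}

def SupportPreconnected (G : SimpleGraph V) : Prop :=
  ∀ x ∈ G.support, ∀ y ∈ G.support, G.Reachable x y

lemma Connected.supportPreconnected (hG : G.Connected) : G.SupportPreconnected :=
  fun x _ y _ => hG.preconnected x y

lemma Reachable.exists_adj_dist_lt {r x : V} (h : G.Reachable r x) (hx : x ≠ r) :
    ∃ y, G.Adj x y ∧ G.dist r y < G.dist r x := by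
  obtain ⟨p, hp⟩ := h.symm.exists_walk_length_eq_dist
  cases p with
  | nil => exact absurd rfl hx
  | cons hadj q =>
    refine ⟨_, hadj, ?_⟩
    rw [dist_comm (u := r), dist_comm (u := r), ← hp, Walk.length_cons]
    exact Nat.lt_succ_of_le (dist_le q)

lemma reachable_of_forall_exists_adj_lt {S : Set V} (f : V → ℕ) {r : V}
    (h : ∀ x ∈ S, x ≠ r → ∃ y ∈ S, G.Adj x y ∧ f y < f x) :
    ∀ x ∈ S, G.Reachable x r := by
  intro x
  induction hfx : f x using Nat.strong_induction_on generalizing x with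
  | _ n ih =>
    intro hx
    by_cases hxr : x = r
    · exact hxr ▸ Reachable.refl x
    obtain ⟨y, hy, hxy, hlt⟩ := h x hx hxr
    exact hxy.reachable.trans (ih _ (hfx ▸ hlt) y rfl hy)

lemma supportPreconnected_deleteEdges {s : Set (Sym2 V)} {r t : V}
    (ht : ∀ x ∈ G.support, G.dist r x ≤ G.dist r t)
    (hdesc : ∀ x ∈ (G.deleteEdges s).support, x ≠ r → x ≠ t →
      ∃ y, G.Adj x y ∧ G.dist r y < G.dist r x ∧ s(x, y) ∉ s) :
    (G.deleteEdges s).SupportPreconnected := by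
  set G' := G.deleteEdges s
  have hsupp : G'.support ⊆ G.support := support_mono (deleteEdges_le s)
  have hreach : ∀ x ∈ G'.support \ {t}, G'.Reachable x r := by
    refine reachable_of_forall_exists_adj_lt (G.dist r) fun x ⟨hx, hxt⟩ hxr => ?_
    obtain ⟨y, hxy, hlt, hs⟩ := hdesc x hx hxr hxt
    have hxy' : G'.Adj x y := (deleteEdges_adj ..).mpr ⟨hxy, hs⟩
    refine ⟨y, ⟨hxy'.right_mem_support, ?_⟩, hxy', hlt⟩
    rintro rfl
    exact absurd (ht x (hsupp hx)) (not_le.mpr hlt)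
  have hreach' : ∀ x ∈ G'.support, G'.Reachable x r := by
    intro x hx
    by_cases hxt : x = t
    · obtain ⟨z, hxz⟩ := G'.mem_support.mp hx
      exact hxz.reachable.trans (hreach z ⟨hxz.right_mem_support, hxt ▸ hxz.ne'⟩)
    · exact hreach x ⟨hx, hxt⟩
  exact fun x hx y hy => (hreach' x hx).trans (hreach' y hy).symm

lemma supportPreconnected_deleteEdges_of_farthest (hG : G.SupportPreconnected) {r v a b : V}
    (hr : r ∈ G.support) (hv : ∀ x ∈ G.support, G.dist r x ≤ G.dist r v) :
    (G.deleteEdges {s(a, v), s(v, b)}).SupportPreconnected := by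
  refine supportPreconnected_deleteEdges hv fun x hx hxr hxv => ?_
  have hxG : x ∈ G.support := support_mono (deleteEdges_le _) hx
  obtain ⟨y, hxy, hlt⟩ := (hG r hr x hxG).exists_adj_dist_lt hxr
  have hyv : y ≠ v := by
    rintro rfl
    exact absurd (hv x hxG) (not_le.mpr hlt)
  refine ⟨y, hxy, hlt, ?_⟩
  simp [hxv, hyv]

lemma supportPreconnected_deleteEdges_of_leaf (hG : G.SupportPreconnected) {r v u w : V}
    (hr : r ∈ G.support) (hv : ∀ x ∈ G.support, G.dist r x ≤ G.dist r v)
    (hvu : G.Adj v u) (hleaf : ∀ z, G.Adj v z → z = u) (huw : G.Adj u w) (hwv : w ≠ v)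
    (hu : u ≠ r → u ∈ (G.deleteEdges {s(v, u), s(u, w)}).support →
      ∃ p, G.Adj u p ∧ G.dist r p < G.dist r u ∧ p ≠ w) :
    (G.deleteEdges {s(v, u), s(u, w)}).SupportPreconnected := by
  have hdist_vu : G.dist r v ≤ G.dist r u + 1 := by
    simpa [dist_eq_one_iff_adj.mpr hvu.symm] using hvu.symm.reachable.dist_triangle_right r
  -- if `w` lies beyond `u`, deleting `uw` may strand `w`, which is then the exceptional vertex
  obtain ⟨t, ht, htw⟩ : ∃ t, (∀ x ∈ G.support, G.dist r x ≤ G.dist r t) ∧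
      (G.dist r u < G.dist r w → t = w) := by
    by_cases hw : G.dist r u < G.dist r w
    · exact ⟨w, fun x hx => (hv x hx).trans (by omega), fun _ => rfl⟩
    · exact ⟨v, hv, fun h => absurd h hw⟩
  refine supportPreconnected_deleteEdges ht fun x hx hxr hxt => ?_
  have hxv : x ≠ v := by
    rintro rfl
    obtain ⟨z, hz⟩ := (mem_support _).mp hx
    rw [deleteEdges_adj] at hz
    exact hz.2 (by simp [hleaf z hz.1])
  by_cases hxu : x = u
  · subst hxu
    obtain ⟨p, hxp, hlt, hpw⟩ := hu hxr hx
    have hpv : p ≠ v := by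
      rintro rfl
      exact absurd (hv x hvu.right_mem_support) (not_le.mpr hlt)
    exact ⟨p, hxp, hlt, by simp [hpv, hpw, hxv, huw.ne]⟩
  · have hxG : x ∈ G.support := support_mono (deleteEdges_le _) hx
    obtain ⟨y, hxy, hlt⟩ := (hG r hr x hxG).exists_adj_dist_lt hxr
    refine ⟨y, hxy, hlt, ?_⟩
    simp only [Set.mem_insert_iff, Set.mem_singleton_iff, Sym2.eq_iff]
    rintro ((⟨h, -⟩ | ⟨h, -⟩) | (⟨h, -⟩ | ⟨rfl, rfl⟩))
    exacts [hxv h, hxu h, hxu h, hxt (htw hlt).symm]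

lemma card_edgeFinset_le_one_of_support_subset [Fintype G.edgeSet] {a b : V}
    (h : G.support ⊆ {a, b}) : #G.edgeFinset ≤ 1 := by
  suffices G.edgeFinset ⊆ {s(a, b)} from (card_le_card this).trans (card_singleton _).le
  intro e he
  induction e using Sym2.ind with
  | _ x y =>
    have hxy : G.Adj x y := mem_edgeFinset.mp he
    have hx := h hxy.left_mem_support
    have hy := h hxy.right_mem_support
    simp only [Set.mem_insert_iff, Set.mem_singleton_iff] at hx hy
    rcases hx with rfl | rfl <;> rcases hy with rfl | rfl <;> simp_all [Sym2.eq_swap]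

lemma exists_adj_ne_of_adj_farthest [Fintype G.edgeSet] (hG : G.SupportPreconnected) {r v : V}
    (hr : r ∈ G.support) (hv : ∀ x ∈ G.support, G.dist r x ≤ G.dist r v) (hrv : G.Adj r v)
    (h2 : 1 < #G.edgeFinset) : ∃ w, G.Adj r w ∧ w ≠ v := by
  by_contra! hw
  suffices G.support ⊆ {r, v} by
    exact absurd (card_edgeFinset_le_one_of_support_subset this) (not_le.mpr h2)
  intro x hx
  have hle : G.dist r x ≤ 1 := (dist_eq_one_iff_adj.mpr hrv) ▸ hv x hx
  rcases Nat.le_one_iff_eq_zero_or_eq_one.mp hle with h0 | h1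
  · exact Or.inl ((hG r hr x hx).dist_eq_zero_iff.mp h0).symm
  · exact Or.inr (hw x (dist_eq_one_iff_adj.mp h1))

lemma exists_adj_of_leaf [Fintype G.edgeSet] (hG : G.SupportPreconnected) {r v u : V}
    (hr : r ∈ G.support) (hv : ∀ x ∈ G.support, G.dist r x ≤ G.dist r v) (hvu : G.Adj v u)
    (h2 : 1 < #G.edgeFinset) :
    ∃ w, G.Adj u w ∧ w ≠ v ∧ (u ≠ r → u ∈ (G.deleteEdges {s(v, u), s(u, w)}).support →
      ∃ p, G.Adj u p ∧ G.dist r p < G.dist r u ∧ p ≠ w) := by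
  by_cases hur : u = r
  · subst hur
    obtain ⟨w, huw, hwv⟩ := exists_adj_ne_of_adj_farthest hG hr hv hvu.symm h2
    exact ⟨w, huw, hwv, fun h => absurd rfl h⟩
  obtain ⟨p, hup, hlt⟩ := (hG r hr u hvu.right_mem_support).exists_adj_dist_lt hur
  by_cases hw : ∃ w, G.Adj u w ∧ w ≠ v ∧ w ≠ p
  · obtain ⟨w, huw, hwv, hwp⟩ := hw
    exact ⟨w, huw, hwv, fun _ _ => ⟨p, hup, hlt, Ne.symm hwp⟩⟩
  push Not at hw
  have hpv : p ≠ v := by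
    rintro rfl
    exact absurd (hv u hvu.right_mem_support) (not_le.mpr hlt)
  refine ⟨p, hup, hpv, fun _ hu => ?_⟩
  obtain ⟨z, hz⟩ := (mem_support _).mp hu
  rw [deleteEdges_adj] at hz
  by_cases hzv : z = v
  · exact absurd (by simp [hzv, Sym2.eq_swap]) hz.2
  · exact absurd (by simp [hw z hz.1 hzv]) hz.2

theorem SupportPreconnected.exists_adj_adj_deleteEdges [Finite V] [Fintype G.edgeSet]
    (hG : G.SupportPreconnected) (h2 : 1 < #G.edgeFinset) :
    ∃ a b c, G.Adj a b ∧ G.Adj b c ∧ a ≠ c ∧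
      (G.deleteEdges {s(a, b), s(b, c)}).SupportPreconnected := by
  obtain ⟨e, he⟩ := card_pos.mp (zero_lt_one.trans h2)
  obtain ⟨r, hr⟩ : G.support.Nonempty := by
    induction e using Sym2.ind with
    | _ x y => exact ⟨x, (mem_edgeFinset.mp he).left_mem_support⟩
  obtain ⟨v, hvsupp, hv⟩ := G.support.exists_max_image (G.dist r) G.support.toFinite ⟨r, hr⟩
  obtain ⟨u, hvu⟩ := (mem_support _).mp hvsupp
  by_cases hdeg : ∃ b, G.Adj v b ∧ b ≠ u
  · obtain ⟨b, hvb, hbu⟩ := hdeg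
    exact ⟨u, v, b, hvu.symm, hvb, Ne.symm hbu,
      supportPreconnected_deleteEdges_of_farthest hG hr hv⟩
  push Not at hdeg
  obtain ⟨w, huw, hwv, hu⟩ := exists_adj_of_leaf hG hr hv hvu h2
  exact ⟨v, u, w, hvu, huw, Ne.symm hwv,
    supportPreconnected_deleteEdges_of_leaf hG hr hv hvu hdeg huw hwv hu⟩

end SimpleGraph

section Decomposition

open SimpleGraph

variable {V : Type*} [DecidableEq V]

lemma IsPathEdgesLE2.card_eq_one_or_two {s : Finset (Sym2 V)} (h : IsPathEdgesLE2 s) :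
    #s = 1 ∨ #s = 2 := by
  rcases h with ⟨a, b, -, rfl⟩ | ⟨a, b, c, hab, -, hac, rfl⟩
  · exact Or.inl (card_singleton _)
  · exact Or.inr (card_pair (by simp [hab, hac]))

variable [Fintype V]

lemma isDecompLE2_empty (G : SimpleGraph V) [DecidableRel G.Adj] (h : #G.edgeFinset = 0) :
    IsDecompLE2 G ∅ :=
  ⟨by simp, by simp, by simpa using (card_eq_zero.mp h).symm⟩

lemma isDecompLE2_singleton (G : SimpleGraph V) [DecidableRel G.Adj] (h : #G.edgeFinset = 1) :
    IsDecompLE2 G {G.edgeFinset} := by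
  obtain ⟨e, he⟩ := card_eq_one.mp h
  refine ⟨fun s hs => ?_, by simp, by simp⟩
  rw [mem_singleton.mp hs, he]
  induction e using Sym2.ind with
  | _ a b =>
    have hab : G.Adj a b := mem_edgeFinset.mp (he ▸ mem_singleton_self _)
    exact Or.inl ⟨a, b, hab.ne, rfl⟩

lemma IsDecompLE2.insert {G : SimpleGraph V} [DecidableRel G.Adj] {P : Finset (Sym2 V)}
    [DecidableRel (G.deleteEdges P).Adj] {D : Finset (Finset (Sym2 V))}
    (hD : IsDecompLE2 (G.deleteEdges P) D) (hP : IsPathEdgesLE2 P) (hPG : P ⊆ G.edgeFinset) :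
    IsDecompLE2 G (insert P D) ∧ #(insert P D) = #D + 1 := by
  obtain ⟨hpaths, hdisj, hsup⟩ := hD
  rw [edgeFinset_deleteEdges] at hsup
  have hsub : ∀ t ∈ D, t ⊆ G.edgeFinset \ P := fun t ht => hsup ▸ le_sup (f := id) ht
  have hPt : ∀ t ∈ D, Disjoint P t := fun t ht =>
    disjoint_left.mpr fun _ hgP hgt => (mem_sdiff.mp (hsub t ht hgt)).2 hgP
  have hPD : P ∉ D := by
    intro hPD
    obtain ⟨g, hg⟩ : P.Nonempty :=
      card_pos.mp (by rcases hP.card_eq_one_or_two with h | h <;> omega)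
    exact disjoint_left.mp (hPt P hPD) hg hg
  refine ⟨⟨?_, ?_, ?_⟩, card_insert_of_notMem hPD⟩
  · simpa [forall_mem_insert] using ⟨hP, hpaths⟩
  · rw [coe_insert]
    exact hdisj.insert fun t ht _ => ⟨hPt t ht, (hPt t ht).symm⟩
  · rw [sup_insert, hsup, id, sup_eq_union, union_sdiff_of_subset hPG]

theorem SimpleGraph.SupportPreconnected.exists_isDecompLE2 {G : SimpleGraph V}
    [DecidableRel G.Adj] (hG : G.SupportPreconnected) :
    ∃ D, IsDecompLE2 G D ∧ #D = (#G.edgeFinset + 1) / 2 := by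
  induction hm : #G.edgeFinset using Nat.strong_induction_on generalizing G with
  | _ m ih =>
    rcases Nat.lt_or_ge m 2 with hm2 | hm2
    · interval_cases m
      · exact ⟨∅, isDecompLE2_empty G hm, by simp⟩
      · exact ⟨{G.edgeFinset}, isDecompLE2_singleton G hm, by simp⟩
    classical
    obtain ⟨a, b, c, hab, hbc, hac, hG'⟩ := hG.exists_adj_adj_deleteEdges (by omega)
    set P : Finset (Sym2 V) := {s(a, b), s(b, c)}
    have hPG : P ⊆ G.edgeFinset := by simp [P, insert_subset_iff, hab, hbc]
    have hcardP : #P = 2 := card_pair (by simp [hab.ne, hac])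
    have hcard' : #(G.deleteEdges P).edgeFinset = m - 2 := by
      rw [edgeFinset_deleteEdges, card_sdiff_of_subset hPG, hcardP, hm]
    obtain ⟨D, hD, hcardD⟩ :=
      ih _ (by omega) (G := G.deleteEdges P) (by simpa [P] using hG') hcard'
    obtain ⟨hD', hcard⟩ := hD.insert (Or.inr ⟨a, b, c, hab.ne, hbc.ne, hac, rfl⟩) hPG
    exact ⟨_, hD', by omega⟩

end Decomposition

section Counting

variable {V : Type*} [Fintype V] [DecidableEq V] {G : SimpleGraph V} [DecidableRel G.Adj]
  {D : Finset (Finset (Sym2 V))}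

lemma IsDecompLE2.card_edgeFinset_eq_sum (hD : IsDecompLE2 G D) :
    #G.edgeFinset = ∑ s ∈ D, #s := by
  rw [← hD.2.2, sup_eq_biUnion]
  exact card_biUnion fun _ hs _ ht hst => hD.2.1 hs ht hst

lemma IsDecompLE2.card_edgeFinset_eq (hD : IsDecompLE2 G D) :
    #G.edgeFinset = #{s ∈ D | #s = 1} + 2 * #{s ∈ D | #s = 2} := by
  rw [hD.card_edgeFinset_eq_sum, card_filter, card_filter, mul_sum, ← sum_add_distrib]
  refine sum_congr rfl fun s hs => ?_
  rcases (hD.1 s hs).card_eq_one_or_two with h | h <;> simp [h]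

lemma IsDecompLE2.card_eq (hD : IsDecompLE2 G D) :
    #D = #{s ∈ D | #s = 1} + #{s ∈ D | #s = 2} := by
  rw [card_eq_sum_ones, card_filter, card_filter, ← sum_add_distrib]
  refine sum_congr rfl fun s hs => ?_
  rcases (hD.1 s hs).card_eq_one_or_two with h | h <;> simp [h]

end Counting

theorem stmt_6_general {V : Type*} [Fintype V] [DecidableEq V]
    (q : SimpleGraph V) [DecidableRel q.Adj]
    (hconn : q.Connected)
    (D : Finset (Finset (Sym2 V)))
    (hD : IsDecompLE2 q D)
    (hmin : ∀ D' : Finset (Finset (Sym2 V)), IsDecompLE2 q D' → D.card ≤ D'.card) :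
    (Even q.edgeFinset.card → (∀ s ∈ D, s.card = 2) ∧ D.card = q.edgeFinset.card / 2) ∧
      (¬ Even q.edgeFinset.card →
        (D.filter (fun s => s.card = 1)).card = 1 ∧
          (D.filter (fun s => s.card = 2)).card = q.edgeFinset.card / 2 ∧
          D.card = q.edgeFinset.card / 2 + 1) ∧
      D.card = (q.edgeFinset.card + 1) / 2 := by
  obtain ⟨D₀, hD₀, hcard₀⟩ := hconn.supportPreconnected.exists_isDecompLE2
  have hle := hmin D₀ hD₀
  have hedges := hD.card_edgeFinset_eq
  have hcard := hD.card_eq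
  simp only [Nat.even_iff]
  refine ⟨fun heven => ⟨fun s hs => ?_, by omega⟩, fun _ => ⟨by omega, by omega, by omega⟩,
    by omega⟩
  have hno_single : {s ∈ D | #s = 1} = ∅ := card_eq_zero.mp (by omega)
  have hs1 : #s ≠ 1 := filter_eq_empty_iff.mp hno_single hs
  exact (hD.1 s hs).card_eq_one_or_two.resolve_left hs1

theorem stmt_6 {V : Type*} [Fintype V] [DecidableEq V]
    (q : SimpleGraph V) [DecidableRel q.Adj]
    (hconn : q.Connected) (hE : q.edgeFinset.Nonempty)
    (D : Finset (Finset (Sym2 V)))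
    (hD : IsDecompLE2 q D)
    (hmin : ∀ D' : Finset (Finset (Sym2 V)), IsDecompLE2 q D' → D.card ≤ D'.card) :
    (Even q.edgeFinset.card → (∀ s ∈ D, s.card = 2) ∧ D.card = q.edgeFinset.card / 2) ∧
      (¬ Even q.edgeFinset.card →
        (D.filter (fun s => s.card = 1)).card = 1 ∧
          (D.filter (fun s => s.card = 2)).card = q.edgeFinset.card / 2 ∧
          D.card = q.edgeFinset.card / 2 + 1) ∧
      D.card = (q.edgeFinset.card + 1) / 2 :=
  stmt_6_general q hconn D hD hmin
end

section
/- Let q be subgraph isomorphic to G via f, and let p be a path in q with canonical form p^c = (u_1, …, u_k); let p′ be the image path of p under f with canonical form p′^c = (v_1, …, v_k). Then either NL_q(u_i) ⊆ NL_G(v_i) for all i = 1, …, k, or NL_q(u_i) ⊆ NL_G(v_{k−i+1}) for all i = 1, …, k. -/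
/-- The labeled neighborhood of a vertex. -/
def NL {V L : Type*} [Fintype V] (H : SimpleGraph V) [DecidableRel H.Adj]
    (vl : V → L) (el : V → V → L) (u : V) : Multiset (L × L) :=
  (H.neighborFinset u).val.map (fun w => (vl w, el u w))

/-- The label code of a path given as a list of vertices. -/
def pathCode {V L : Type*} (vl : V → L) (el : V → V → L) : List V → List L
  | [] => []
  | [v] => [vl v]
  | v :: w :: rest => vl v :: el v w :: pathCode vl el (w :: rest)

/-- The canonical form of a path: the direction with lexicographically smaller code. -/
def canonPath {V L : Type*} [LinearOrder L] (vl : V → L) (el : V → V → L)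
    (p : List V) : List V :=
  if pathCode vl el p ≤ pathCode vl el p.reverse then p else p.reverse

/-!
The canonical form only chooses a direction: `p^c` is `p` or `p^r`, and `p′^c` is `p′` or `p′^r`,
so `p′^c` is the image of `p^c` read either forwards or backwards. Positionwise containment then
reduces to the pointwise fact `NL_q(u) ⊆ NL_G(f u)`: `f` maps the neighbours of `u` injectively
to neighbours of `f u`, preserving vertex and edge labels.
-/

theorem NL_le_NL_of_injective {V W L : Type*} [Fintype V] [Fintype W]
    (q : SimpleGraph V) [DecidableRel q.Adj] (G : SimpleGraph W) [DecidableRel G.Adj]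
    (lq : V → L) (eq : V → V → L) (lG : W → L) (eG : W → W → L)
    (f : V → W) (hinj : Function.Injective f)
    (hadj : ∀ a b : V, q.Adj a b → G.Adj (f a) (f b))
    (hvl : ∀ a : V, lq a = lG (f a))
    (hel : ∀ a b : V, q.Adj a b → eq a b = eG (f a) (f b))
    (u : V) : NL q lq eq u ≤ NL G lG eG (f u) := by
  have hsub : (q.neighborFinset u).val.map f ≤ (G.neighborFinset (f u)).val := by
    rw [Multiset.le_iff_subset ((q.neighborFinset u).nodup.map hinj)]
    intro x hx
    obtain ⟨w, hw, rfl⟩ := Multiset.mem_map.mp hx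
    simpa using hadj u w (by simpa using hw)
  have hlabels : NL q lq eq u =
      ((q.neighborFinset u).val.map f).map (fun x => (lG x, eG (f u) x)) := by
    rw [NL, Multiset.map_map]
    refine Multiset.map_congr rfl fun w hw => ?_
    simp only [Function.comp, hvl w, hel u w (by simpa using hw)]
  rw [hlabels]
  exact Multiset.map_le_map hsub

section canonPath

variable {V W L : Type*} [LinearOrder L]

theorem canonPath_eq_or_eq_reverse (vl : V → L) (el : V → V → L) (p : List V) :
    canonPath vl el p = p ∨ canonPath vl el p = p.reverse := by
  unfold canonPath
  split_ifs
  exacts [Or.inl rfl, Or.inr rfl]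

theorem length_canonPath (vl : V → L) (el : V → V → L) (p : List V) :
    (canonPath vl el p).length = p.length := by
  rcases canonPath_eq_or_eq_reverse vl el p with h | h <;> simp [h]

theorem canonPath_map_eq_or (vl : V → L) (el : V → V → L) (vl' : W → L) (el' : W → W → L)
    (f : V → W) (p : List V) :
    canonPath vl' el' (p.map f) = (canonPath vl el p).map f ∨
      canonPath vl' el' (p.map f) = (canonPath vl el p).reverse.map f := by
  rcases canonPath_eq_or_eq_reverse vl el p with h | h <;>
    rcases canonPath_eq_or_eq_reverse vl' el' (p.map f) with h' | h' <;>
    simp [h, h', List.map_reverse]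

end canonPath

theorem List.getD_map_of_lt {α β : Type*} (f : α → β) (l : List α) (d : α) (d' : β) {i : ℕ}
    (hi : i < l.length) : (l.map f).getD i d' = f (l.getD i d) := by
  rw [List.getD_eq_getElem _ _ (by simpa using hi), List.getD_eq_getElem _ _ hi,
    List.getElem_map]

theorem List.getD_reverse_map_of_lt {α β : Type*} (f : α → β) (l : List α) (d : α) (d' : β)
    {i : ℕ} (hi : i < l.length) :
    (l.reverse.map f).getD (l.length - 1 - i) d' = f (l.getD i d) := by
  rw [List.getD_map_of_lt f _ d d' (by simp; omega), List.getD_reverse _ (by omega)]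
  congr 2
  omega

theorem stmt_12_general {V W L : Type*} [Fintype V] [Fintype W] [LinearOrder L]
    [Inhabited V] [Inhabited W]
    (q : SimpleGraph V) [DecidableRel q.Adj] (G : SimpleGraph W) [DecidableRel G.Adj]
    (lq : V → L) (eq : V → V → L) (lG : W → L) (eG : W → W → L)
    (f : V → W)
    (hinj : Function.Injective f)
    (hadj : ∀ a b : V, q.Adj a b → G.Adj (f a) (f b))
    (hvl : ∀ a : V, lq a = lG (f a))
    (hel : ∀ a b : V, q.Adj a b → eq a b = eG (f a) (f b))
    (p : List V) :
    (∀ i < p.length,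
        NL q lq eq ((canonPath lq eq p).getD i default) ≤
          NL G lG eG ((canonPath lG eG (p.map f)).getD i default)) ∨
      (∀ i < p.length,
        NL q lq eq ((canonPath lq eq p).getD i default) ≤
          NL G lG eG ((canonPath lG eG (p.map f)).getD (p.length - 1 - i) default)) := by
  have hNL := NL_le_NL_of_injective q G lq eq lG eG f hinj hadj hvl hel
  have hlen := length_canonPath lq eq p
  rcases canonPath_map_eq_or lq eq lG eG f p with h | h <;> rw [h]
  · refine Or.inl fun i hi => ?_
    rw [List.getD_map_of_lt f _ default default (hlen ▸ hi)]
    exact hNL _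
  · refine Or.inr fun i hi => ?_
    rw [← hlen, List.getD_reverse_map_of_lt f _ default default (hlen ▸ hi)]
    exact hNL _

theorem stmt_12 {V W L : Type*} [Fintype V] [Fintype W] [LinearOrder L]
    [Inhabited V] [Inhabited W]
    (q : SimpleGraph V) [DecidableRel q.Adj] (G : SimpleGraph W) [DecidableRel G.Adj]
    (lq : V → L) (eq : V → V → L) (lG : W → L) (eG : W → W → L)
    (f : V → W)
    (hinj : Function.Injective f)
    (hadj : ∀ a b : V, q.Adj a b → G.Adj (f a) (f b))
    (hvl : ∀ a : V, lq a = lG (f a))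
    (hel : ∀ a b : V, q.Adj a b → eq a b = eG (f a) (f b))
    (p : List V) (hchain : p.Chain' q.Adj) (hnodup : p.Nodup) :
    (∀ i < p.length,
        NL q lq eq ((canonPath lq eq p).getD i default) ≤
          NL G lG eG ((canonPath lG eG (p.map f)).getD i default)) ∨
      (∀ i < p.length,
        NL q lq eq ((canonPath lq eq p).getD i default) ≤
          NL G lG eG ((canonPath lG eG (p.map f)).getD (p.length - 1 - i) default)) :=
  stmt_12_general q G lq eq lG eG f hinj hadj hvl hel p
end
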